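/- arXiv:1506.06683 — 4 statements merged into one kernel-verified Lean document; each statement's English description precedes it below -/
import Mathlib

section
/- With the notation above, the map φ_μ : L → [0,1], w ↦ μ([w_min, w]), is surjective. -/
open MeasureTheory Topology Filter Set

/-- The shift map on one-sided infinite words, erasing the first letter. -/
def shiftMap {A : Type*} (w : ℕ → A) : ℕ → A := fun n => w (n + 1)

/-- A shift space: a closed, shift-invariant subset of `A^ℕ`. -/
def IsShiftSpace {A : Type*} [TopologicalSpace A] (L : Set (ℕ → A)) : Prop :=
  IsClosed L ∧ ∀ w ∈ L, shiftMap w ∈ L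

/-- The finite word `v` occurs in `w` at position `j`. -/
def OccursAt {A : Type*} (w : ℕ → A) (j : ℕ) (v : List A) : Prop :=
  ∀ i : Fin v.length, w (j + i) = v.get i

/-- `v` is a factor (subblock) of the language of `L`. -/
def IsFactor {A : Type*} (L : Set (ℕ → A)) (v : List A) : Prop :=
  ∃ w ∈ L, ∃ j, OccursAt w j v

/-- The cylinder of `v` in `L`: words of `L` having `v` as a prefix. -/
def Cyl {A : Type*} (L : Set (ℕ → A)) (v : List A) : Set (ℕ → A) :=
  {w ∈ L | OccursAt w 0 v}

/-- Strict lexicographic order on infinite words. -/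
def LexLt {A : Type*} [LinearOrder A] (w w' : ℕ → A) : Prop :=
  ∃ n, (∀ i < n, w i = w' i) ∧ w n < w' n

/-- Lexicographic order (non-strict) on infinite words. -/
def LexLe {A : Type*} [LinearOrder A] (w w' : ℕ → A) : Prop := LexLt w w' ∨ w = w'

/-- The word interval `[w, w']` in `L` for the lexicographic order. -/
def wordInterval {A : Type*} [LinearOrder A] (L : Set (ℕ → A)) (w w' : ℕ → A) :
    Set (ℕ → A) := {z ∈ L | LexLe w z ∧ LexLe z w'}

/-- The length-`n` prefix of an infinite word, as a list. -/
def prefixWord {A : Type*} (w : ℕ → A) (n : ℕ) : List A := List.ofFn (fun i : Fin n => w i)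

/-- A factor is left special if it has at least two distinct left one-letter extensions. -/
def IsLeftSpecial {A : Type*} (L : Set (ℕ → A)) (v : List A) : Prop :=
  ∃ a b : A, a ≠ b ∧ IsFactor L (a :: v) ∧ IsFactor L (b :: v)

/-- A factor is right special if it has at least two distinct right one-letter extensions. -/
def IsRightSpecial {A : Type*} (L : Set (ℕ → A)) (v : List A) : Prop :=
  ∃ a b : A, a ≠ b ∧ IsFactor L (v ++ [a]) ∧ IsFactor L (v ++ [b])

/-- The set of infinite left special words: all prefixes are left special factors. -/
def SPset {A : Type*} (L : Set (ℕ → A)) : Set (ℕ → A) :=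
  {w | ∀ n : ℕ, IsLeftSpecial L (prefixWord w n)}

/-- The factor complexity `p_L(n)`: the number of distinct length-`n` factors of `L`. -/
noncomputable def complexity {A : Type*} (L : Set (ℕ → A)) (n : ℕ) : ℕ :=
  Nat.card {v : List A // v.length = n ∧ IsFactor L v}

/-- The number of left special factors of length `n`. -/
noncomputable def splCount {A : Type*} (L : Set (ℕ → A)) (n : ℕ) : ℕ :=
  Nat.card {v : List A // v.length = n ∧ IsFactor L v ∧ IsLeftSpecial L v}

/-- A minimal shift: a nonempty shift space with no nonempty proper subshift. -/
def IsMinimalShift {A : Type*} [TopologicalSpace A] (L : Set (ℕ → A)) : Prop :=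
  IsShiftSpace L ∧ L.Nonempty ∧
    ∀ L' ⊆ L, IsShiftSpace L' → L'.Nonempty → L' = L

/-- Aperiodicity: no periodic word in `L`. -/
def IsAperiodic {A : Type*} (L : Set (ℕ → A)) : Prop :=
  ∀ w ∈ L, ∀ k : ℕ, 0 < k → shiftMap^[k] w ≠ w

/-- The factor set of `L` is prolongable: every factor extends by a letter on both sides. -/
def Prolongable {A : Type*} (L : Set (ℕ → A)) : Prop :=
  ∀ v : List A, IsFactor L v →
    (∃ a : A, IsFactor L (a :: v)) ∧ (∃ b : A, IsFactor L (v ++ [b]))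

/-!
Transport everything to `Lex (ℕ → A)` with the product topology, where `φ_μ(w) = μ(L ∩ Iic w)`.
For a target value `c`, let `w` be the least point of the closure of `{v ∈ L | c ≤ μ(L ∩ Iic v)}`.
Points of that set converging to `w` from above give `c ≤ μ(L ∩ Iic w)` by continuity from above.
Every point of `L` below `w` has `μ(L ∩ Iic u) < c`, and `L ∩ Iio w` is either exhausted by a
sequence converging to `w` or has a largest element, so `μ(L ∩ Iio w) ≤ c`; since `μ` has no atoms
this is `μ(L ∩ Iic w)`.
-/

section OrderTopology

variable {X : Type*} [LinearOrder X] [TopologicalSpace X] [FrechetUrysohnSpace X]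

theorem exists_seq_iInter_Iic_eq [ClosedIciTopology X] {S : Set X} {w : X}
    (hw : w ∈ closure S) (hS : ∀ v ∈ S, w ≤ v) :
    ∃ v : ℕ → X, (∀ k, v k ∈ S) ∧ ⋂ k, Iic (v k) = Iic w := by
  obtain ⟨v, hvS, hvw⟩ := mem_closure_iff_seq_limit.1 hw
  refine ⟨v, hvS, Subset.antisymm (fun u hu => ?_) fun u hu =>
    mem_iInter.2 fun k => le_trans hu (hS _ (hvS k))⟩
  by_contra hwu
  obtain ⟨k, hk⟩ := (hvw.eventually (isOpen_Iio.mem_nhds (not_le.1 hwu))).exists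
  exact not_lt.2 (mem_iInter.1 hu k) hk

theorem exists_seq_iUnion_Iic_eq [ClosedIicTopology X] {T : Set X} {w : X}
    (hw : w ∈ closure T) (hT : ∀ t ∈ T, t < w) :
    ∃ u : ℕ → X, (∀ k, u k ∈ T) ∧ ⋃ k, Iic (u k) = Iio w := by
  obtain ⟨u, huT, huw⟩ := mem_closure_iff_seq_limit.1 hw
  refine ⟨u, huT, Subset.antisymm (iUnion_subset fun k t ht => lt_of_le_of_lt ht (hT _ (huT k)))
    fun t ht => ?_⟩
  obtain ⟨k, hk⟩ := (huw.eventually (isOpen_Ioi.mem_nhds ht)).exists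
  exact mem_iUnion.2 ⟨k, le_of_lt hk⟩

end OrderTopology

section Measure

variable {X ι : Type*} [LinearOrder X]

theorem directed_subset_inter_Iic (L : Set X) (u : ι → X) :
    Directed (· ⊆ ·) fun k => L ∩ Iic (u k) := fun i j =>
  (le_total (u i) (u j)).elim
    (fun h => ⟨j, inter_subset_inter_right L (Iic_subset_Iic.2 h), subset_rfl⟩)
    fun h => ⟨i, subset_rfl, inter_subset_inter_right L (Iic_subset_Iic.2 h)⟩

theorem directed_supset_inter_Iic (L : Set X) (u : ι → X) :
    Directed (· ⊇ ·) fun k => L ∩ Iic (u k) := fun i j =>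
  (le_total (u i) (u j)).elim
    (fun h => ⟨i, subset_rfl, inter_subset_inter_right L (Iic_subset_Iic.2 h)⟩)
    fun h => ⟨j, inter_subset_inter_right L (Iic_subset_Iic.2 h), subset_rfl⟩

variable [TopologicalSpace X] [CompactSpace X] [ClosedIicTopology X] [ClosedIciTopology X]
  [FrechetUrysohnSpace X] [MeasurableSpace X]

theorem measure_inter_Iio_le (μ : Measure X) {L : Set X} (hL : IsClosed L) {w : X}
    {c : ENNReal} (hc : ∀ u ∈ L, u < w → μ (L ∩ Iic u) ≤ c) : μ (L ∩ Iio w) ≤ c := by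
  by_cases hw : w ∈ closure (L ∩ Iio w)
  · obtain ⟨u, huT, hu⟩ := exists_seq_iUnion_Iic_eq hw fun t ht => ht.2
    calc μ (L ∩ Iio w) = μ (⋃ k, L ∩ Iic (u k)) := by rw [← inter_iUnion, hu]
      _ = ⨆ k, μ (L ∩ Iic (u k)) := (directed_subset_inter_Iic L u).measure_iUnion
      _ ≤ c := iSup_le fun k => hc _ (huT k).1 (huT k).2
  · -- `w` is isolated from below in `L`, so `L ∩ Iio w` is closed and has a greatest element
    have hclosed : IsClosed (L ∩ Iio w) := by
      refine closure_subset_iff_isClosed.1 fun t ht => ?_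
      obtain ⟨htL, htw⟩ :=
        closure_minimal (inter_subset_inter_right L Iio_subset_Iic_self) (hL.inter isClosed_Iic) ht
      exact ⟨htL, lt_of_le_of_ne htw fun h => hw (h ▸ ht)⟩
    rcases (L ∩ Iio w).eq_empty_or_nonempty with hempty | hne
    · simp [hempty]
    obtain ⟨m, hmT, hm⟩ := hclosed.isCompact.exists_isGreatest hne
    calc μ (L ∩ Iio w) ≤ μ (L ∩ Iic m) := measure_mono fun x hx => ⟨hx.1, hm hx⟩
      _ ≤ c := hc m hmT.1 hmT.2

theorem exists_mem_measure_inter_Iic_eq [OpensMeasurableSpace X] (μ : Measure X)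
    [IsFiniteMeasure μ] [NullSingletonClass μ] {L : Set X} (hL : IsClosed L) (hne : L.Nonempty)
    {c : ENNReal} (hc : c ≤ μ L) : ∃ w ∈ L, μ (L ∩ Iic w) = c := by
  obtain ⟨m, hmL, hm⟩ := hL.isCompact.exists_isGreatest hne
  set S := {v ∈ L | c ≤ μ (L ∩ Iic v)}
  have hmS : m ∈ S := ⟨hmL, by rwa [inter_eq_left.2 (show L ⊆ Iic m from fun x hx => hm hx)]⟩
  obtain ⟨w, hwS, hw⟩ := isClosed_closure.isCompact.exists_isLeast ⟨m, subset_closure hmS⟩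
  refine ⟨w, closure_minimal (sep_subset L _) hL hwS, le_antisymm ?_ ?_⟩
  · rw [measure_congr ((ae_eq_refl L).inter Iio_ae_eq_Iic).symm]
    refine measure_inter_Iio_le μ hL fun u huL huw => ?_
    by_contra! h
    exact not_le.2 huw (hw (subset_closure ⟨huL, h.le⟩))
  · obtain ⟨v, hvS, hv⟩ := exists_seq_iInter_Iic_eq hwS fun v hv => hw (subset_closure hv)
    rw [← hv, inter_iInter, (directed_supset_inter_Iic L v).measure_iInter
      (fun k => (hL.inter isClosed_Iic).measurableSet.nullMeasurableSet) ⟨0, measure_ne_top _ _⟩]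
    exact le_iInf fun k => (hvS k).2

end Measure

instance MeasurableEquiv.nullSingletonClass_map {α β : Type*} [MeasurableSpace α]
    [MeasurableSpace β] (e : α ≃ᵐ β) (μ : Measure α) [NullSingletonClass μ] :
    NullSingletonClass (μ.map e) :=
  ⟨fun x => by rw [e.map_apply]; exact (subsingleton_singleton.preimage e.injective).measure_zero μ⟩

theorem lexLe_iff_toLex_le {A : Type*} [LinearOrder A] {u w : ℕ → A} :
    LexLe u w ↔ toLex u ≤ toLex w := by
  rw [le_iff_lt_or_eq, LexLe]
  exact or_congr Iff.rfl toLex.injective.eq_iff.symm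

section LexTopology

variable {A : Type*} [TopologicalSpace A]

/- `Lex (ℕ → A)` is given the product topology and σ-algebra of `ℕ → A`, not an order topology;
for discrete `A` its half-lines are nevertheless closed. -/
instance : TopologicalSpace (Lex (ℕ → A)) := inferInstanceAs (TopologicalSpace (ℕ → A))

instance [CompactSpace A] : CompactSpace (Lex (ℕ → A)) := inferInstanceAs (CompactSpace (ℕ → A))

instance [FirstCountableTopology A] : FirstCountableTopology (Lex (ℕ → A)) :=
  inferInstanceAs (FirstCountableTopology (ℕ → A))

theorem continuous_ofLex : Continuous (ofLex : Lex (ℕ → A) → ℕ → A) := continuous_id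

theorem isOpen_setOf_exists_eqOn_and_mem [DiscreteTopology A] (a : ℕ → A) (s : ℕ → Set A) :
    IsOpen {v : ℕ → A | ∃ n, (∀ i < n, v i = a i) ∧ v n ∈ s n} := by
  have : {v : ℕ → A | ∃ n, (∀ i < n, v i = a i) ∧ v n ∈ s n} =
      ⋃ n, (Iio n).pi (fun i => {a i}) ∩ (fun v => v n) ⁻¹' s n := by
    ext v; simp
  rw [this]
  exact isOpen_iUnion fun n => (isOpen_set_pi (finite_Iio n) fun _ _ => isOpen_discrete _).inter
    ((isOpen_discrete _).preimage (continuous_apply n))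

variable [LinearOrder A] [DiscreteTopology A]

instance : ClosedIicTopology (Lex (ℕ → A)) :=
  ⟨fun a => isOpen_compl_iff.1 <| by
    rw [compl_Iic]
    show IsOpen {v : ℕ → A | ∃ n, (∀ i < n, a i = v i) ∧ a n < v n}
    simpa only [eq_comm (a := a _), mem_Ioi] using
      isOpen_setOf_exists_eqOn_and_mem a fun n => Ioi (a n)⟩

instance : ClosedIciTopology (Lex (ℕ → A)) :=
  ⟨fun a => isOpen_compl_iff.1 <| by
    rw [compl_Ici]
    exact isOpen_setOf_exists_eqOn_and_mem a fun n => Iio (a n)⟩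

end LexTopology

section LexMeasurable

variable {A : Type*} [MeasurableSpace A]

instance : MeasurableSpace (Lex (ℕ → A)) := inferInstanceAs (MeasurableSpace (ℕ → A))

instance [TopologicalSpace A] [SecondCountableTopology A] [OpensMeasurableSpace A] :
    OpensMeasurableSpace (Lex (ℕ → A)) :=
  inferInstanceAs (OpensMeasurableSpace (ℕ → A))

def measurableEquivToLex : (ℕ → A) ≃ᵐ Lex (ℕ → A) where
  toEquiv := toLex
  measurable_toFun := measurable_id
  measurable_invFun := measurable_id

theorem wordInterval_eq_preimage [LinearOrder A] {L : Set (ℕ → A)} {wmin : ℕ → A}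
    (hwmin : ∀ w ∈ L, LexLe wmin w) (w : ℕ → A) :
    wordInterval L wmin w = measurableEquivToLex ⁻¹' (ofLex ⁻¹' L ∩ Iic (toLex w)) := by
  ext u
  exact ⟨fun hu => ⟨hu.1, lexLe_iff_toLex_le.1 hu.2.2⟩,
    fun hu => ⟨hu.1, hwmin u hu.1, lexLe_iff_toLex_le.2 hu.2⟩⟩

end LexMeasurable

theorem phi_mu_surjective_general
    {A : Type*} [Fintype A] [TopologicalSpace A] [DiscreteTopology A] [LinearOrder A]
    [MeasurableSpace A] [BorelSpace A]
    (L : Set (ℕ → A)) (hL : IsShiftSpace L)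
    (μ : Measure (ℕ → A)) [IsProbabilityMeasure μ] (hμL : μ L = 1)
    (hsing : ∀ w : ℕ → A, μ {w} = 0)
    (wmin : ℕ → A) (hwmin : wmin ∈ L) (hwmin' : ∀ w ∈ L, LexLe wmin w) :
    ∀ x ∈ Set.Icc (0:ℝ) 1, ∃ w ∈ L, (μ (wordInterval L wmin w)).toReal = x := by
  rintro x ⟨hx0, hx1⟩
  have : NullSingletonClass μ := ⟨hsing⟩
  have hxL : ENNReal.ofReal x ≤ μ.map measurableEquivToLex (ofLex ⁻¹' L) := by
    rw [MeasurableEquiv.map_apply]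
    exact hμL ▸ ENNReal.ofReal_le_one.2 hx1
  obtain ⟨w, hwL, hw⟩ := exists_mem_measure_inter_Iic_eq _ (hL.1.preimage continuous_ofLex)
    ⟨toLex wmin, hwmin⟩ hxL
  refine ⟨ofLex w, hwL, ?_⟩
  rw [wordInterval_eq_preimage hwmin', ← MeasurableEquiv.map_apply, toLex_ofLex, hw,
    ENNReal.toReal_ofReal hx0]

/-- The map `φ_μ(w) = μ([w_min, w])` is onto `[0,1]`. -/
theorem phi_mu_surjective
    {A : Type*} [Fintype A] [TopologicalSpace A] [DiscreteTopology A] [LinearOrder A]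
    [MeasurableSpace A] [BorelSpace A]
    (L : Set (ℕ → A)) (hL : IsShiftSpace L)
    (μ : Measure (ℕ → A)) [IsProbabilityMeasure μ] (hμL : μ L = 1)
    (hreg : μ.Regular)
    (hsing : ∀ w : ℕ → A, μ {w} = 0)
    (hcyl : ∀ v : List A, (Cyl L v).Nonempty → 0 < μ (Cyl L v))
    (wmin : ℕ → A) (hwmin : wmin ∈ L) (hwmin' : ∀ w ∈ L, LexLe wmin w) :
    ∀ x ∈ Set.Icc (0:ℝ) 1, ∃ w ∈ L, (μ (wordInterval L wmin w)).toReal = x :=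
  phi_mu_surjective_general L hL μ hμL hsing wmin hwmin hwmin'
end

section
/- If L is a shift space whose factor set is prolongable, a is a letter, and u is a factor of L that is not left special, then σ(Cyl_L(au)) = Cyl_L(u). -/
open MeasureTheory Topology Filter Set

/-! Every word `w ∈ Cyl_L(u)` extends to the left only by `a`: by prolongability each prefix
`w[0, n)` has some left extension `b`, and once `n ≥ |u|` the word `bu` is a factor, so `b = a`
because `u` is not left special. Hence every prefix of `aw` is a factor, and a closed,
shift-invariant `L` contains every word all of whose prefixes are factors. -/

section Words

variable {A : Type*}

lemma shiftMap_iterate_apply (w : ℕ → A) (j n : ℕ) : shiftMap^[j] w n = w (j + n) := by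
  induction j generalizing w with
  | zero => simp
  | succ j ih =>
    rw [Function.iterate_succ_apply, ih, shiftMap]
    congr 1
    omega

lemma occursAt_iterate_shiftMap_zero_iff {w : ℕ → A} {j : ℕ} {v : List A} :
    OccursAt (shiftMap^[j] w) 0 v ↔ OccursAt w j v := by
  simp [OccursAt, shiftMap_iterate_apply]

lemma occursAt_zero_cons_iff {w : ℕ → A} {a : A} {v : List A} :
    OccursAt w 0 (a :: v) ↔ w 0 = a ∧ OccursAt (shiftMap w) 0 v := by
  simp only [OccursAt, Fin.forall_fin_succ, List.length_cons]
  simp [shiftMap]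

lemma OccursAt.of_isPrefix {w : ℕ → A} {j : ℕ} {v v' : List A} (h : OccursAt w j v')
    (hv : v <+: v') : OccursAt w j v := fun i => by
  rw [h ⟨i, i.2.trans_le hv.length_le⟩, List.get_eq_getElem, List.get_eq_getElem,
    hv.getElem]

lemma occursAt_zero_prefixWord_iff {z x : ℕ → A} {n : ℕ} :
    OccursAt z 0 (prefixWord x n) ↔ ∀ k < n, z k = x k := by
  simp [OccursAt, prefixWord, Fin.forall_iff]

lemma prefixWord_succ (x : ℕ → A) (n : ℕ) :
    prefixWord x (n + 1) = x 0 :: prefixWord (shiftMap x) n := by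
  simp [prefixWord, List.ofFn_succ, shiftMap]

lemma prefixWord_isPrefix_prefixWord (x : ℕ → A) {m n : ℕ} (h : m ≤ n) :
    prefixWord x m <+: prefixWord x n := by
  obtain ⟨k, rfl⟩ := Nat.exists_eq_add_of_le h
  rw [prefixWord, prefixWord, List.ofFn_add]
  exact List.prefix_append _ _

lemma OccursAt.isPrefix_prefixWord {w : ℕ → A} {v : List A} (h : OccursAt w 0 v) {n : ℕ}
    (hn : v.length ≤ n) : v <+: prefixWord w n := by
  have hv : prefixWord w v.length = v :=
    List.ext_get (by simp [prefixWord]) fun i _ _ => by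
      simpa [prefixWord] using h ⟨i, by omega⟩
  exact hv ▸ prefixWord_isPrefix_prefixWord w hn

end Words

section Factors

variable {A : Type*} {L : Set (ℕ → A)}

lemma IsFactor.of_isPrefix {v v' : List A} (h : IsFactor L v') (hv : v <+: v') :
    IsFactor L v :=
  let ⟨w, hw, j, hocc⟩ := h
  ⟨w, hw, j, hocc.of_isPrefix hv⟩

lemma isFactor_prefixWord {w : ℕ → A} (hw : w ∈ L) (n : ℕ) : IsFactor L (prefixWord w n) :=
  ⟨w, hw, 0, occursAt_zero_prefixWord_iff.2 fun _ _ => rfl⟩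

lemma Prolongable.isFactor_cons_of_isPrefix (hprol : Prolongable L) {a : A} {u v : List A}
    (hau : IsFactor L (a :: u))
    (hnls : ∀ b c : A, IsFactor L (b :: u) → IsFactor L (c :: u) → b = c)
    (hv : IsFactor L v) (huv : u <+: v) : IsFactor L (a :: v) := by
  obtain ⟨b, hb⟩ := (hprol v hv).1
  obtain rfl : b = a := hnls b a (hb.of_isPrefix (List.cons_prefix_cons.2 ⟨rfl, huv⟩)) hau
  exact hb

variable [TopologicalSpace A]

lemma IsShiftSpace.exists_mem_of_isFactor (hL : IsShiftSpace L) {v : List A}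
    (hv : IsFactor L v) : ∃ z ∈ L, OccursAt z 0 v :=
  let ⟨w, hw, j, hocc⟩ := hv
  ⟨shiftMap^[j] w, Set.MapsTo.iterate hL.2 j hw, occursAt_iterate_shiftMap_zero_iff.2 hocc⟩

lemma IsShiftSpace.mem_of_forall_isFactor_prefixWord (hL : IsShiftSpace L) {x : ℕ → A}
    (hx : ∀ n, IsFactor L (prefixWord x n)) : x ∈ L := by
  choose z hzL hz using fun n => hL.exists_mem_of_isFactor (hx n)
  have hlim : Tendsto z atTop (𝓝 x) := tendsto_pi_nhds.2 fun k =>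
    tendsto_const_nhds.congr' <| (eventually_gt_atTop k).mono fun n hn =>
      (occursAt_zero_prefixWord_iff.1 (hz n) k hn).symm
  exact hL.1.mem_of_tendsto hlim (Eventually.of_forall hzL)

end Factors

theorem shift_image_of_cylinder_general
    {A : Type*} [TopologicalSpace A]
    (L : Set (ℕ → A)) (hL : IsShiftSpace L) (hprol : Prolongable L)
    (a : A) (u : List A) (hau : IsFactor L (a :: u))
    (hnls : ∀ b c : A, IsFactor L (b :: u) → IsFactor L (c :: u) → b = c) :
    shiftMap '' (Cyl L (a :: u)) = Cyl L u := by
  refine subset_antisymm ?_ fun w ⟨hwL, hwu⟩ => ?_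
  · rintro _ ⟨z, ⟨hzL, hzau⟩, rfl⟩
    exact ⟨hL.2 z hzL, (occursAt_zero_cons_iff.1 hzau).2⟩
  · let x : ℕ → A := Stream'.cons a w
    have hx : ∀ n ≥ u.length, IsFactor L (prefixWord x (n + 1)) := fun n hn => by
      rw [prefixWord_succ]
      exact hprol.isFactor_cons_of_isPrefix hau hnls (isFactor_prefixWord hwL n)
        (hwu.isPrefix_prefixWord hn)
    have hxL : x ∈ L := hL.mem_of_forall_isFactor_prefixWord fun n =>
      (hx (n + u.length) (by omega)).of_isPrefix (prefixWord_isPrefix_prefixWord x (by omega))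
    exact ⟨x, ⟨hxL, occursAt_zero_cons_iff.2 ⟨rfl, hwu⟩⟩, rfl⟩

/-- If `Fact_L` is prolongable and `u` is not left special, with `au` a factor,
then `σ(Cyl_L(au)) = Cyl_L(u)`. -/
theorem shift_image_of_cylinder
    {A : Type*} [Fintype A] [TopologicalSpace A] [DiscreteTopology A]
    (L : Set (ℕ → A)) (hL : IsShiftSpace L) (hprol : Prolongable L)
    (a : A) (u : List A) (hu : IsFactor L u) (hau : IsFactor L (a :: u))
    (hnls : ∀ b c : A, IsFactor L (b :: u) → IsFactor L (c :: u) → b = c) :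
    shiftMap '' (Cyl L (a :: u)) = Cyl L u :=
  shift_image_of_cylinder_general L hL hprol a u hau hnls
end

section
/- Let L be a minimal shift with linear factor complexity, i.e., p_L(n) = O(n). Then the set SP_L of infinite left special words of L is finite. -/
open MeasureTheory Topology Filter Set

/-! If `SP_L` had `C + 1` elements, their length-`n` prefixes would be `C + 1` distinct left
special factors for all large `n`. Then `p_L(n + 1) - p_L(n) ≥ C + 1` from some point on, which
is incompatible with `p_L(n) ≤ C n`. -/

section ShiftSpace

variable {A : Type*}

lemma occursAt_of_occursAt_shiftMap {w : ℕ → A} {j : ℕ} {v : List A}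
    (h : OccursAt (shiftMap w) j v) : OccursAt w (j + 1) v := fun i => by
  simpa only [shiftMap, Nat.add_right_comm] using h i

lemma OccursAt.cons_of_succ {w : ℕ → A} {j : ℕ} {v : List A}
    (h : OccursAt w (j + 1) v) : OccursAt w j (w j :: v) := fun i => by
  refine Fin.cases (by simp) (fun k => ?_) i
  simpa [Nat.add_assoc, Nat.add_comm 1] using h k

lemma IsFactor.of_cons {L : Set (ℕ → A)} {a : A} {v : List A}
    (h : IsFactor L (a :: v)) : IsFactor L v := by
  obtain ⟨w, hw, j, hj⟩ := h
  refine ⟨w, hw, j + 1, fun i => ?_⟩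
  simpa [Nat.add_assoc, Nat.add_comm 1] using hj i.succ

lemma IsLeftSpecial.isFactor {L : Set (ℕ → A)} {v : List A} (h : IsLeftSpecial L v) :
    IsFactor L v :=
  h.choose_spec.choose_spec.2.1.of_cons

lemma eq_of_prefixWord_eq {x y : ℕ → A} {n i : ℕ} (h : prefixWord x n = prefixWord y n)
    (hi : i < n) : x i = y i :=
  congrFun (List.ofFn_inj.mp h) ⟨i, hi⟩

lemma eventually_injOn_prefixWord {s : Set (ℕ → A)} (hs : s.Finite) :
    ∀ᶠ n in atTop, s.InjOn (prefixWord · n) := by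
  have hpairs : ∀ p ∈ s ×ˢ s, ∀ᶠ n in atTop, prefixWord p.1 n = prefixWord p.2 n → p.1 = p.2 := by
    rintro ⟨x, y⟩ -
    by_cases hxy : x = y
    · exact Eventually.of_forall fun _ _ => hxy
    obtain ⟨m, hm⟩ := Function.ne_iff.mp hxy
    filter_upwards [eventually_gt_atTop m] with n hn heq
    exact absurd (eq_of_prefixWord_eq heq hn) hm
  filter_upwards [(eventually_all_finite (hs.prod hs)).mpr hpairs] with n hn x hx y hy
  exact hn (x, y) ⟨hx, hy⟩

instance finite_length_eq_and [Finite A] (n : ℕ) (P : List A → Prop) :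
    Finite {v : List A // v.length = n ∧ P v} :=
  ((List.finite_length_eq A n).subset fun _ hv => hv.1).to_subtype

lemma ncard_le_splCount [Finite A] {L : Set (ℕ → A)} {s : Set (ℕ → A)} {n : ℕ}
    (hs : s ⊆ SPset L) (hinj : s.InjOn (prefixWord · n)) : s.ncard ≤ splCount L n := by
  let π : s → {v : List A // v.length = n ∧ IsFactor L v ∧ IsLeftSpecial L v} :=
    fun x => ⟨prefixWord x n, by simp [prefixWord], (hs x.2 n).isFactor, hs x.2 n⟩
  exact Nat.card_le_card_of_injective π
    fun x y hxy => Subtype.ext (hinj x.2 y.2 (congrArg Subtype.val hxy))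

variable [TopologicalSpace A] [DiscreteTopology A]

lemma isOpen_setOf_occursAt (j : ℕ) (v : List A) : IsOpen {w : ℕ → A | OccursAt w j v} := by
  have heq : {w : ℕ → A | OccursAt w j v}
      = ⋂ i : Fin v.length, (fun w : ℕ → A => w (j + i)) ⁻¹' {v.get i} := by
    ext w
    simp [OccursAt, Set.mem_iInter]
  rw [heq]
  exact isOpen_iInter_of_finite fun i => (isOpen_discrete _).preimage (continuous_apply _)

namespace IsMinimalShift

variable {L : Set (ℕ → A)}

/-- The words of `L` avoiding `v` form a subshift; by minimality it is empty. -/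
lemma exists_occursAt (hL : IsMinimalShift L) {v : List A} (hv : IsFactor L v) {w : ℕ → A}
    (hw : w ∈ L) : ∃ j, OccursAt w j v := by
  by_contra! hno
  let L' := {w ∈ L | ∀ j, ¬ OccursAt w j v}
  have hclosed : IsClosed L' := by
    have : L' = L ∩ ⋂ j : ℕ, {w : ℕ → A | OccursAt w j v}ᶜ := by
      ext w
      simp [L', Set.mem_iInter]
    rw [this]
    exact hL.1.1.inter (isClosed_iInter fun j => (isOpen_setOf_occursAt j v).isClosed_compl)
  have hinv : ∀ w ∈ L', shiftMap w ∈ L' := fun w hw =>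
    ⟨hL.1.2 w hw.1, fun j hj => hw.2 (j + 1) (occursAt_of_occursAt_shiftMap hj)⟩
  have hL' : L' = L := hL.2.2 L' (fun _ hw => hw.1) ⟨hclosed, hinv⟩ ⟨w, hw, hno⟩
  obtain ⟨u, hu, j, hj⟩ := hv
  exact (hL' ▸ hu : u ∈ L').2 j hj

lemma exists_cons_isFactor (hL : IsMinimalShift L) {v : List A} (hv : IsFactor L v) :
    ∃ a, IsFactor L (a :: v) := by
  obtain ⟨w, hw⟩ := hL.2.1
  obtain ⟨j, hj⟩ := hL.exists_occursAt hv (hL.1.2 w hw)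
  exact ⟨w j, w, hw, j, (occursAt_of_occursAt_shiftMap hj).cons_of_succ⟩

/-- Each length-`n` factor `v` has a left extension `a v :: v`, and each left special one a
second, different one `b v :: v`; all of these are distinct factors of length `n + 1`. -/
lemma complexity_add_splCount_le [Finite A] (hL : IsMinimalShift L) (n : ℕ) :
    complexity L n + splCount L n ≤ complexity L (n + 1) := by
  let F := {v : List A // v.length = n ∧ IsFactor L v}
  let S := {v : List A // v.length = n ∧ IsFactor L v ∧ IsLeftSpecial L v}
  choose a ha using fun v : F => hL.exists_cons_isFactor v.2.2
  have hb : ∀ v : S, ∃ b, b ≠ a ⟨v.1, v.2.1, v.2.2.1⟩ ∧ IsFactor L (b :: v.1) := by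
    rintro ⟨v, hv, hfac, c, d, hcd, hc, hd⟩
    by_cases h : c = a ⟨v, hv, hfac⟩
    · exact ⟨d, h ▸ hcd.symm, hd⟩
    · exact ⟨c, h, hc⟩
  choose b hba hb using hb
  let ext : F ⊕ S → {v : List A // v.length = n + 1 ∧ IsFactor L v} :=
    Sum.elim (fun v => ⟨a v :: v.1, by simp [v.2.1], ha v⟩)
      (fun v => ⟨b v :: v.1, by simp [v.2.1], hb v⟩)
  have hext : Function.Injective ext := by
    refine Function.Injective.sumElim (fun v w h => ?_) (fun v w h => ?_) (fun v w h => ?_)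
    · exact Subtype.ext (List.cons.inj (congrArg Subtype.val h)).2
    · exact Subtype.ext (List.cons.inj (congrArg Subtype.val h)).2
    · obtain ⟨hab, hvw⟩ := List.cons.inj (congrArg Subtype.val h)
      have : v = ⟨w.1, w.2.1, w.2.2.1⟩ := Subtype.ext hvw
      exact hba w (this ▸ hab).symm
  calc complexity L n + splCount L n = Nat.card (F ⊕ S) := Nat.card_sum.symm
    _ ≤ complexity L (n + 1) := Nat.card_le_card_of_injective ext hext

lemma mul_le_complexity_add [Finite A] (hL : IsMinimalShift L) {n₀ K : ℕ}
    (hK : ∀ n ≥ n₀, K ≤ splCount L n) (m : ℕ) : m * K ≤ complexity L (n₀ + m) := by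
  induction m with
  | zero => simp
  | succ m ih =>
    calc (m + 1) * K = m * K + K := Nat.succ_mul m K
      _ ≤ complexity L (n₀ + m) + splCount L (n₀ + m) :=
        Nat.add_le_add ih (hK _ (Nat.le_add_right _ _))
      _ ≤ complexity L (n₀ + (m + 1)) := hL.complexity_add_splCount_le _

/-- Taking `m = C n₀ + 1` in `mul_le_complexity_add` gives `m K ≤ C (n₀ + m) < m (C + 1)`. -/
lemma le_of_le_splCount [Finite A] (hL : IsMinimalShift L) {C n₀ K : ℕ}
    (hC : ∀ n, 1 ≤ n → complexity L n ≤ C * n) (hK : ∀ n ≥ n₀, K ≤ splCount L n) : K ≤ C := by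
  by_contra! hCK
  have hlower := hL.mul_le_complexity_add hK (C * n₀ + 1)
  have hupper := hC (n₀ + (C * n₀ + 1)) (by omega)
  nlinarith

end IsMinimalShift

end ShiftSpace

/-- A minimal shift with linear factor complexity (`p_L(n) = O(n)`) has
finitely many infinite left special words. -/
theorem SP_finite_of_linear_complexity
    {A : Type*} [Fintype A] [TopologicalSpace A] [DiscreteTopology A]
    (L : Set (ℕ → A)) (hL : IsMinimalShift L)
    (hlin : ∃ C : ℕ, ∀ n : ℕ, 1 ≤ n → complexity L n ≤ C * n) :
    (SPset L).Finite := by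
  obtain ⟨C, hC⟩ := hlin
  by_contra hinf
  obtain ⟨s, hsSP, hsfin, hcard⟩ := Set.Infinite.exists_subset_ncard_eq hinf (C + 1)
  obtain ⟨n₀, hn₀⟩ := eventually_atTop.mp (eventually_injOn_prefixWord hsfin)
  have hsp : ∀ n ≥ n₀, C + 1 ≤ splCount L n := fun n hn =>
    hcard ▸ ncard_le_splCount hsSP (hn₀ n hn)
  exact Nat.lt_irrefl C (hL.le_of_le_splCount hC hsp)
end

section
/- Let T be a piecewise increasing interval exchange transformation of [0,1) and P a finite monotonicity partition of [0,1) into right-open intervals on each of which T is increasing. Then the symbolic coding map cod_P : [0,1) → A^ℕ, sending x to the sequence of labels of the partition elements containing T^n(x), is non-decreasing for the lexicographic order. If moreover every orbit of T is dense, then cod_P is strictly increasing. -/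
open MeasureTheory Topology Filter Set

/-- The paper's `cod_P`. -/
def coding {X ι : Type*} (T : X → X) (α : X → ι) (x : X) : ℕ → ι :=
  fun n => α (T^[n] x)

section LexOrder

variable {A : Type*} [LinearOrder A] {w w' : ℕ → A}

theorem lexLt_of_ne_of_le_of_agree (hne : w ≠ w')
    (hle : ∀ n, (∀ i < n, w i = w' i) → w n ≤ w' n) : LexLt w w' := by
  classical
  have hdiff : ∃ n, w n ≠ w' n := Function.ne_iff.1 hne
  have hagree : ∀ i < Nat.find hdiff, w i = w' i := fun i hi =>
    not_not.1 (Nat.find_min hdiff hi)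
  exact ⟨Nat.find hdiff, hagree, (hle _ hagree).lt_of_ne (Nat.find_spec hdiff)⟩

theorem lexLe_of_le_of_agree (hle : ∀ n, (∀ i < n, w i = w' i) → w n ≤ w' n) :
    LexLe w w' := by
  by_cases heq : w = w'
  · exact Or.inr heq
  · exact Or.inl (lexLt_of_ne_of_le_of_agree heq hle)

end LexOrder

theorem monotoneOn_of_mem_Ico_castSucc_succ {β : Type*} [LinearOrder β] {m : ℕ}
    {y : Fin (m + 1) → β} (hy : Monotone y) {α : β → Fin m} {S : Set β}
    (hα : ∀ z ∈ S, z ∈ Ico (y (α z).castSucc) (y (α z).succ)) : MonotoneOn α S := by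
  intro z hz z' hz' hzz'
  by_contra! hlt
  have hsucc : (α z').succ ≤ (α z).castSucc := Fin.succ_le_castSucc_iff.2 hlt
  exact absurd ((hy hsucc).trans ((hα z hz).1.trans hzz')) (hα z' hz').2.not_ge

section Expanding

variable {G ι : Type*} [AddCommGroup G] [LinearOrder G] [IsOrderedAddMonoid G]
  {S : Set G} {T : G → G} {α : G → ι}

def ExpandingOnFibers (T : G → G) (α : G → ι) (S : Set G) : Prop :=
  ∀ z ∈ S, ∀ z' ∈ S, α z = α z' → z ≤ z' → z' - z ≤ T z' - T z

/-- Each step along two orbits that share a label can only widen their gap, so the gap after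
`n` agreeing labels is at least the initial one. -/
theorem sub_le_iterate_sub_of_coding_agree (hmaps : MapsTo T S S)
    (hexp : ExpandingOnFibers T α S)
    {x x' : G} (hx : x ∈ S) (hx' : x' ∈ S) (hle : x ≤ x') :
    ∀ n, (∀ k < n, coding T α x k = coding T α x' k) → x' - x ≤ T^[n] x' - T^[n] x
  | 0, _ => le_rfl
  | n + 1, hagree => by
    have ih := sub_le_iterate_sub_of_coding_agree hmaps hexp hx hx' hle n
      fun k hk => hagree k (hk.trans n.lt_succ_self)
    have horder : T^[n] x ≤ T^[n] x' := sub_nonneg.1 ((sub_nonneg.2 hle).trans ih)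
    rw [Function.iterate_succ_apply', Function.iterate_succ_apply']
    exact ih.trans (hexp _ (hmaps.iterate n hx) _ (hmaps.iterate n hx')
      (hagree n n.lt_succ_self) horder)

theorem iterate_le_iterate_of_coding_agree (hmaps : MapsTo T S S)
    (hexp : ExpandingOnFibers T α S)
    {x x' : G} (hx : x ∈ S) (hx' : x' ∈ S) (hle : x ≤ x') {n : ℕ}
    (hagree : ∀ k < n, coding T α x k = coding T α x' k) : T^[n] x ≤ T^[n] x' :=
  sub_nonneg.1 ((sub_nonneg.2 hle).trans
    (sub_le_iterate_sub_of_coding_agree hmaps hexp hx hx' hle n hagree))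

theorem coding_lexLe_of_le [LinearOrder ι] (hmaps : MapsTo T S S)
    (hexp : ExpandingOnFibers T α S)
    (hα : MonotoneOn α S) {x x' : G} (hx : x ∈ S) (hx' : x' ∈ S) (hle : x ≤ x') :
    LexLe (coding T α x) (coding T α x') :=
  lexLe_of_le_of_agree fun _ hagree => hα (hmaps.iterate _ hx) (hmaps.iterate _ hx')
    (iterate_le_iterate_of_coding_agree hmaps hexp hx hx' hle hagree)

theorem coding_lexLt_of_le_of_ne [LinearOrder ι] (hmaps : MapsTo T S S)
    (hexp : ExpandingOnFibers T α S)
    (hα : MonotoneOn α S) {x x' : G} (hx : x ∈ S) (hx' : x' ∈ S) (hle : x ≤ x')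
    (hne : coding T α x ≠ coding T α x') :
    LexLt (coding T α x) (coding T α x') :=
  lexLt_of_ne_of_le_of_agree hne fun _ hagree => hα (hmaps.iterate _ hx) (hmaps.iterate _ hx')
    (iterate_le_iterate_of_coding_agree hmaps hexp hx hx' hle hagree)

end Expanding

/-- If `x < x'` had the same coding, the orbit of `x` would stay below `1 - (x' - x)`, hence
would miss the point `1 - (x' - x) / 2`. -/
theorem coding_ne_of_lt_of_dense_orbit {ι : Type*} {T : ℝ → ℝ} {α : ℝ → ι}
    (hmaps : MapsTo T (Ico 0 1) (Ico 0 1))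
    (hexp : ExpandingOnFibers T α (Ico 0 1))
    {x x' : ℝ} (hx : x ∈ Ico 0 1) (hx' : x' ∈ Ico 0 1) (hlt : x < x')
    (hdense : ∀ z ∈ Ico (0 : ℝ) 1, ∀ ε > (0 : ℝ), ∃ n : ℕ, |T^[n] x - z| < ε) :
    coding T α x ≠ coding T α x' := by
  intro heq
  set d := x' - x
  have hz : 1 - d / 2 ∈ Ico (0 : ℝ) 1 := ⟨by linarith [hx.1, hx'.2], by linarith⟩
  obtain ⟨n, hn⟩ := hdense _ hz (d / 2) (by linarith)
  have hgap := sub_le_iterate_sub_of_coding_agree hmaps hexp hx hx' hlt.le n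
    fun k _ => congrFun heq k
  linarith [(abs_lt.1 hn).1, (hmaps.iterate n hx').2]

theorem coding_monotone_of_piecewise_increasing_IET_general
    (m : ℕ) (y : Fin (m + 1) → ℝ)
    (hy : StrictMono y)
    (T : ℝ → ℝ)
    (hmaps : Set.MapsTo T (Set.Ico (0:ℝ) 1) (Set.Ico (0:ℝ) 1))
    (hgrow : ∀ i : Fin m, ∀ z ∈ Set.Ico (y i.castSucc) (y i.succ),
      ∀ z' ∈ Set.Ico (y i.castSucc) (y i.succ), z ≤ z' → z' - z ≤ T z' - T z)
    (α : ℝ → Fin m)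
    (hα : ∀ z ∈ Set.Ico (0:ℝ) 1, z ∈ Set.Ico (y (α z).castSucc) (y (α z).succ)) :
    (∀ x ∈ Set.Ico (0:ℝ) 1, ∀ x' ∈ Set.Ico (0:ℝ) 1, x ≤ x' →
      LexLe (fun n : ℕ => α (T^[n] x)) (fun n : ℕ => α (T^[n] x'))) ∧
    ((∀ x ∈ Set.Ico (0:ℝ) 1, ∀ z ∈ Set.Ico (0:ℝ) 1, ∀ ε > (0:ℝ),
        ∃ n : ℕ, |T^[n] x - z| < ε) →
      ∀ x ∈ Set.Ico (0:ℝ) 1, ∀ x' ∈ Set.Ico (0:ℝ) 1, x < x' →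
        LexLt (fun n : ℕ => α (T^[n] x)) (fun n : ℕ => α (T^[n] x'))) := by
  have hexp : ExpandingOnFibers T α (Ico 0 1) := fun z hz z' hz' hαz =>
    hgrow (α z) z (hα z hz) z' (hαz ▸ hα z' hz')
  have hmono : MonotoneOn α (Ico 0 1) := monotoneOn_of_mem_Ico_castSucc_succ hy.monotone hα
  refine ⟨fun x hx x' hx' hle => coding_lexLe_of_le hmaps hexp hmono hx hx' hle,
    fun hdense x hx x' hx' hlt => ?_⟩
  exact coding_lexLt_of_le_of_ne hmaps hexp hmono hx hx' hlt.le
    (coding_ne_of_lt_of_dense_orbit hmaps hexp hx hx' hlt (hdense x hx))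

/-- The symbolic coding of a piecewise increasing IET with respect to a
finite monotonicity partition is non-decreasing for the lexicographic order, and strictly
increasing if all orbits of `T` are dense. (The hypothesis `hgrow` expresses that `T` is
an interval exchange, piecewise increasing with unit slopes, on each partition
interval.) -/
theorem coding_monotone_of_piecewise_increasing_IET
    (m : ℕ) (hm : 0 < m) (y : Fin (m + 1) → ℝ)
    (hy : StrictMono y) (hy0 : y 0 = 0) (hy1 : y (Fin.last m) = 1)
    (T : ℝ → ℝ)
    (hmaps : Set.MapsTo T (Set.Ico (0:ℝ) 1) (Set.Ico (0:ℝ) 1))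
    (hgrow : ∀ i : Fin m, ∀ z ∈ Set.Ico (y i.castSucc) (y i.succ),
      ∀ z' ∈ Set.Ico (y i.castSucc) (y i.succ), z ≤ z' → z' - z ≤ T z' - T z)
    (α : ℝ → Fin m)
    (hα : ∀ z ∈ Set.Ico (0:ℝ) 1, z ∈ Set.Ico (y (α z).castSucc) (y (α z).succ)) :
    (∀ x ∈ Set.Ico (0:ℝ) 1, ∀ x' ∈ Set.Ico (0:ℝ) 1, x ≤ x' →
      LexLe (fun n : ℕ => α (T^[n] x)) (fun n : ℕ => α (T^[n] x'))) ∧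
    ((∀ x ∈ Set.Ico (0:ℝ) 1, ∀ z ∈ Set.Ico (0:ℝ) 1, ∀ ε > (0:ℝ),
        ∃ n : ℕ, |T^[n] x - z| < ε) →
      ∀ x ∈ Set.Ico (0:ℝ) 1, ∀ x' ∈ Set.Ico (0:ℝ) 1, x < x' →
        LexLt (fun n : ℕ => α (T^[n] x)) (fun n : ℕ => α (T^[n] x'))) :=
  coding_monotone_of_piecewise_increasing_IET_general m y hy T hmaps hgrow α hα
end
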